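/- arXiv:2501.00155 — 2 statements merged into one kernel-verified Lean document; each statement's English description precedes it below -/
import Mathlib

section
/- Assume a = 1/4 (with b, d, e ∈ ℝ arbitrary). Let u be a solution of the Longstaff–Schwartz equation on Ω, and let ε ∈ ℝ. Then the function w(x,y,t) = u( (2·e^{bt/2}·√x − ε)² · e^{-bt}/4, y, t ) satisfies the Longstaff–Schwartz equation at every point (x,y,t) ∈ Ω with 2·e^{bt/2}·√x > ε. -/
/-- Partial derivative in `x`. -/
noncomputable def pdX (u : ℝ → ℝ → ℝ → ℝ) (x y t : ℝ) : ℝ := deriv (fun z => u z y t) x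

/-- Partial derivative in `y`. -/
noncomputable def pdY (u : ℝ → ℝ → ℝ → ℝ) (x y t : ℝ) : ℝ := deriv (fun z => u x z t) y

/-- Partial derivative in `t`. -/
noncomputable def pdT (u : ℝ → ℝ → ℝ → ℝ) (x y t : ℝ) : ℝ := deriv (fun z => u x y z) t

/-- Second partial derivative in `x`. -/
noncomputable def pdXX (u : ℝ → ℝ → ℝ → ℝ) (x y t : ℝ) : ℝ := deriv (fun z => pdX u z y t) x

/-- Second partial derivative in `y`. -/
noncomputable def pdYY (u : ℝ → ℝ → ℝ → ℝ) (x y t : ℝ) : ℝ := deriv (fun z => pdY u x z t) y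

/-- The domain `Ω = {(x,y,t) : x > 0, y > 0}`. -/
def Omega : Set (ℝ × ℝ × ℝ) := {p | 0 < p.1 ∧ 0 < p.2.1}

/-- The Longstaff–Schwartz (Kolmogorov backward) equation
`u_t = −((a−bx)·u_x + (d−ey)·u_y + (x/2)·u_xx + (y/2)·u_yy)` holds at the point `(x,y,t)`. -/
def LSEq (a b d e : ℝ) (u : ℝ → ℝ → ℝ → ℝ) (x y t : ℝ) : Prop :=
  pdT u x y t =
    -((a - b * x) * pdX u x y t + (d - e * y) * pdY u x y t +
      x / 2 * pdXX u x y t + y / 2 * pdYY u x y t)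

/-- `u` is a solution of the Longstaff–Schwartz equation on `Ω`: it is C² on `Ω` and
satisfies the equation at every point of `Ω`. -/
def IsLSSolution (a b d e : ℝ) (u : ℝ → ℝ → ℝ → ℝ) : Prop :=
  ContDiffOn ℝ 2 (fun p : ℝ × ℝ × ℝ => u p.1 p.2.1 p.2.2) Omega ∧
  ∀ x y t : ℝ, 0 < x → 0 < y → LSEq a b d e u x y t

/-! For `a = 1/4` the `x`-part of the equation is the generator of `X = R²`, where `R` is the
Ornstein–Uhlenbeck process `dR = -(b/2) R dt + dW/2`. Shifting `R` by a deterministic solution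
`c t = (ε/2) e^{-bt/2}` of `c' = -(b/2) c` gives another such process, so `u ((√x - c t)², y, t)`
solves the equation again, and this is the function of the theorem. Analytically: a time-dependent
substitution `x ↦ ψ x t` preserves the equation as soon as `x ψ_x² = ψ` and
`ψ_t + (a - b x) ψ_x + (x/2) ψ_xx = a - b ψ`, and `ψ = (√x - c t)²` satisfies both. -/

open Topology Real

lemma isOpen_omega : IsOpen Omega :=
  (isOpen_lt continuous_const continuous_fst).inter
    (isOpen_lt continuous_const continuous_snd.fst)

section ChangeOfX

variable {u : ℝ → ℝ → ℝ → ℝ} {ψ : ℝ → ℝ → ℝ} {x y t : ℝ}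

lemma pdX_comp {p : ℝ} (hu : DifferentiableAt ℝ (fun ξ => u ξ y t) (ψ x t))
    (hψ : HasDerivAt (ψ · t) p x) :
    pdX (fun x y t => u (ψ x t) y t) x y t = pdX u (ψ x t) y t * p :=
  (hu.hasDerivAt.comp x hψ :).deriv

lemma pdXX_comp {p : ℝ → ℝ} {q : ℝ}
    (hu : ∀ᶠ ξ in 𝓝 (ψ x t), DifferentiableAt ℝ (fun ξ => u ξ y t) ξ)
    (hux : DifferentiableAt ℝ (fun ξ => pdX u ξ y t) (ψ x t))
    (hψ : ∀ᶠ z in 𝓝 x, HasDerivAt (ψ · t) (p z) z) (hp : HasDerivAt p q x) :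
    pdXX (fun x y t => u (ψ x t) y t) x y t =
      pdXX u (ψ x t) y t * p x ^ 2 + pdX u (ψ x t) y t * q := by
  have hψx : HasDerivAt (ψ · t) (p x) x := hψ.self_of_nhds
  have hu' : ∀ᶠ z in 𝓝 x, DifferentiableAt ℝ (fun ξ => u ξ y t) (ψ z t) :=
    hψx.continuousAt.eventually hu
  have hpdX : (fun z => pdX (fun x y t => u (ψ x t) y t) z y t) =ᶠ[𝓝 x]
      fun z => pdX u (ψ z t) y t * p z := by
    filter_upwards [hu', hψ] with z huz hψz
    exact pdX_comp huz hψz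
  have hprod : HasDerivAt (fun z => pdX u (ψ z t) y t * p z)
      (pdXX u (ψ x t) y t * p x * p x + pdX u (ψ x t) y t * q) x :=
    (hux.hasDerivAt.comp x hψx).mul hp
  rw [pdXX, hpdX.deriv_eq, hprod.deriv]
  ring

lemma pdT_comp {τ : ℝ}
    (hu : DifferentiableAt ℝ (fun q : ℝ × ℝ × ℝ => u q.1 q.2.1 q.2.2) (ψ x t, y, t))
    (hψ : HasDerivAt (ψ x ·) τ t) :
    pdT (fun x y t => u (ψ x t) y t) x y t = pdX u (ψ x t) y t * τ + pdT u (ψ x t) y t := by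
  set L := fderiv ℝ (fun q : ℝ × ℝ × ℝ => u q.1 q.2.1 q.2.2) (ψ x t, y, t)
  have hX : HasDerivAt (fun ξ => u ξ y t) (L (1, 0, 0)) (ψ x t) :=
    hu.hasFDerivAt.comp_hasDerivAt (ψ x t) (f := fun ξ => (ξ, y, t))
      ((hasDerivAt_id' _).prodMk ((hasDerivAt_const _ y).prodMk (hasDerivAt_const _ t)))
  have hT : HasDerivAt (fun s => u (ψ x t) y s) (L (0, 0, 1)) t :=
    hu.hasFDerivAt.comp_hasDerivAt t (f := fun s => (ψ x t, y, s))
      ((hasDerivAt_const _ _).prodMk ((hasDerivAt_const _ y).prodMk (hasDerivAt_id' t)))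
  have hwT : HasDerivAt (fun s => u (ψ x s) y s) (L (τ, 0, 1)) t :=
    hu.hasFDerivAt.comp_hasDerivAt t (f := fun s => (ψ x s, y, s))
      (hψ.prodMk ((hasDerivAt_const _ y).prodMk (hasDerivAt_id' t)))
  have hdir : ((τ, 0, 1) : ℝ × ℝ × ℝ) = τ • (1, 0, 0) + (0, 0, 1) := by simp
  rw [pdT, pdX, pdT, hwT.deriv, hX.deriv, hT.deriv, hdir, map_add, map_smul, smul_eq_mul, mul_comm]

theorem LSEq.comp_of_coeff {a b d e : ℝ} {p : ℝ → ℝ} {q τ : ℝ}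
    (hu : LSEq a b d e u (ψ x t) y t)
    (hreg : ContDiffAt ℝ 2 (fun q : ℝ × ℝ × ℝ => u q.1 q.2.1 q.2.2) (ψ x t, y, t))
    (hψx : ∀ᶠ z in 𝓝 x, HasDerivAt (ψ · t) (p z) z) (hp : HasDerivAt p q x)
    (hψt : HasDerivAt (ψ x ·) τ t)
    (hdiffusion : x * p x ^ 2 = ψ x t)
    (hdrift : τ + (a - b * x) * p x + x / 2 * q = a - b * ψ x t) :
    LSEq a b d e (fun x y t => u (ψ x t) y t) x y t := by
  have hslice : ContDiffAt ℝ 2 (fun ξ => u ξ y t) (ψ x t) :=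
    hreg.comp (ψ x t) (f := fun ξ => (ξ, y, t)) (by fun_prop)
  have hslice_diff : ∀ᶠ ξ in 𝓝 (ψ x t), DifferentiableAt ℝ (fun ξ => u ξ y t) ξ :=
    (hslice.eventually (by simp)).mono fun _ h => h.differentiableAt (by simp)
  have hslice_deriv : DifferentiableAt ℝ (fun ξ => pdX u ξ y t) (ψ x t) :=
    (hslice.derivWithin (m := 1) (by norm_num)).differentiableAt one_ne_zero
  unfold LSEq at hu ⊢
  rw [pdT_comp (hreg.differentiableAt (by simp)) hψt,
    pdX_comp (hslice_diff.self_of_nhds) hψx.self_of_nhds,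
    pdXX_comp hslice_diff hslice_deriv hψx hp]
  change _ = -(_ + (d - e * y) * pdY u (ψ x t) y t + _ + y / 2 * pdYY u (ψ x t) y t)
  linear_combination hu + pdX u (ψ x t) y t * hdrift + pdXX u (ψ x t) y t / 2 * hdiffusion

end ChangeOfX

lemma hasDerivAt_sqrt_sub_sq (c : ℝ) {z : ℝ} (hz : 0 < z) :
    HasDerivAt (fun z => (√z - c) ^ 2) (1 - c / √z) z := by
  refine (((hasDerivAt_sqrt hz.ne').sub_const c).pow 2).congr_deriv ?_
  field_simp
  ring

lemma hasDerivAt_one_sub_div_sqrt (c : ℝ) {z : ℝ} (hz : 0 < z) :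
    HasDerivAt (fun z => 1 - c / √z) (c / (2 * z * √z)) z := by
  have hs : 0 < √z := sqrt_pos.mpr hz
  refine (((hasDerivAt_const z c).div (hasDerivAt_sqrt hz.ne') hs.ne').const_sub 1).congr_deriv ?_
  field_simp
  linear_combination (-c) * sq_sqrt hz.le

theorem LSEq.sqrt_sub {b d e x y t : ℝ} {u : ℝ → ℝ → ℝ → ℝ} {c : ℝ → ℝ}
    (hu : IsLSSolution (1 / 4) b d e u) (hc : HasDerivAt c (-(b / 2) * c t) t)
    (hx : 0 < x) (hy : 0 < y) (hcx : c t < √x) :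
    LSEq (1 / 4) b d e (fun x y t => u ((√x - c t) ^ 2) y t) x y t := by
  have hξ : 0 < (√x - c t) ^ 2 := pow_pos (sub_pos.mpr hcx) 2
  refine LSEq.comp_of_coeff (ψ := fun x t => (√x - c t) ^ 2) (hu.2 _ _ _ hξ hy)
    (hu.1.contDiffAt (isOpen_omega.mem_nhds ⟨hξ, hy⟩))
    ((eventually_gt_nhds hx).mono fun z hz => hasDerivAt_sqrt_sub_sq (c t) hz)
    (hasDerivAt_one_sub_div_sqrt (c t) hx) ((hc.const_sub √x).pow 2) ?_ ?_
  · field_simp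
    rw [sq_sqrt hx.le]
  · field_simp
    norm_num
    linear_combination 16 * b * (√x - c t) * sq_sqrt hx.le

/-- Symmetry of the Longstaff–Schwartz equation when `a = 1/4` (subcase 3.1, group `G₄`). -/
theorem ls_symmetry_a_quarter_translation (a b d e : ℝ) (ha : a = 1 / 4)
    (u : ℝ → ℝ → ℝ → ℝ) (hu : IsLSSolution a b d e u) (ε : ℝ) :
    ∀ x y t : ℝ, 0 < x → 0 < y → 2 * Real.exp (b * t / 2) * Real.sqrt x > ε →
      LSEq a b d e
        (fun x y t =>
          u ((2 * Real.exp (b * t / 2) * Real.sqrt x - ε) ^ 2 * Real.exp (-(b * t)) / 4) y t)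
        x y t := by
  intro x y t hx hy hε
  subst ha
  set c : ℝ → ℝ := fun s => ε / 2 * exp (-(b / 2) * s)
  have hexp : ∀ s, exp (b * s / 2) * exp (-(b / 2) * s) = 1 := fun s => by
    rw [← exp_add, ← exp_zero]
    ring_nf
  have hw : (fun x y t =>
      u ((2 * exp (b * t / 2) * √x - ε) ^ 2 * exp (-(b * t)) / 4) y t) =
      fun x y t => u ((√x - c t) ^ 2) y t := by
    funext x y t
    have hsq : exp (-(b * t)) = exp (-(b / 2) * t) ^ 2 := by rw [← exp_nat_mul]; ring_nf
    rw [hsq]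
    congr 1
    linear_combination
      (√x ^ 2 * (exp (b * t / 2) * exp (-(b / 2) * t) + 1) - ε * √x * exp (-(b / 2) * t)) * hexp t
  have hc : HasDerivAt c (-(b / 2) * c t) t :=
    (((hasDerivAt_id' t).const_mul (-(b / 2))).exp.const_mul (ε / 2)).congr_deriv (by ring)
  have hcx : c t < √x :=
    calc c t = ε / 2 * exp (-(b / 2) * t) := rfl
      _ < 2 * exp (b * t / 2) * √x / 2 * exp (-(b / 2) * t) := by gcongr
      _ = √x := by linear_combination √x * hexp t
  rw [hw]
  exact LSEq.sqrt_sub hu hc hx hy hcx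
end

section
/- Assume d = 1/4 (with a, b, e ∈ ℝ arbitrary). Let u be a solution of the Longstaff–Schwartz equation on Ω, and let ε ∈ ℝ. Then the function w(x,y,t) = exp( (e·ε·e^{et/2} · (4√y − ε·e^{et/2}))/2 ) · u( x, (2√y − ε·e^{et/2})²/4, t ) satisfies the Longstaff–Schwartz equation at every point (x,y,t) ∈ Ω with 2√y > ε·e^{et/2}. -/
/-! In the variable `ρ = √y` the `y`-part of the operator is `y/2 ∂²_y + (d - e y) ∂_y =
(1/8) ∂²_ρ + ((d/2 - 1/8)/ρ - e ρ/2) ∂_ρ`, and for `d = 1/4` the singular term disappears.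
What is left is an Ornstein–Uhlenbeck operator in `ρ`, which admits the translation
`ρ ↦ ρ - s/2` compensated by the gauge factor `exp (e s (4ρ - s)/2)` as soon as `s' = e s/2`,
i.e. `s = ε e^{et/2}`. The verification is the chain rule: every partial derivative of the
transformed function is expressed through those of `u` at `(x, (ρ - s/2)², t)`, and the
equation for `u` there closes a rational identity in `ρ`. -/

open Real Filter Topology

section OneVariable

variable {φ h v : ℝ → ℝ} {y : ℝ}

theorem hasDerivAt_exp_mul_comp {φ' h' v' : ℝ} (hφ : HasDerivAt φ φ' y) (hh : HasDerivAt h h' y)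
    (hv : HasDerivAt v v' (h y)) :
    HasDerivAt (fun z => exp (φ z) * v (h z)) (exp (φ y) * (φ' * v (h y) + v' * h')) y :=
  (hφ.exp.mul (hv.comp y hh)).congr_deriv (by rw [Function.comp_apply]; ring)

theorem hasDerivAt_deriv_exp_mul_comp {φ' h' : ℝ → ℝ} {φ'' h'' v'' : ℝ}
    (hφ : ∀ᶠ z in 𝓝 y, HasDerivAt φ (φ' z) z) (hh : ∀ᶠ z in 𝓝 y, HasDerivAt h (h' z) z)
    (hv : ∀ᶠ z in 𝓝 y, DifferentiableAt ℝ v (h z))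
    (hφ' : HasDerivAt φ' φ'' y) (hh' : HasDerivAt h' h'' y) (hv' : HasDerivAt (deriv v) v'' (h y)) :
    HasDerivAt (deriv fun z => exp (φ z) * v (h z))
      (exp (φ y) * ((φ'' + φ' y ^ 2) * v (h y) + 2 * φ' y * h' y * deriv v (h y) +
        v'' * h' y ^ 2 + deriv v (h y) * h'')) y := by
  have hfirst : (deriv fun z => exp (φ z) * v (h z)) =ᶠ[𝓝 y]
      fun z => exp (φ z) * (φ' z * v (h z) + deriv v (h z) * h' z) := by
    filter_upwards [hφ, hh, hv] with z hφz hhz hvz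
    exact (hasDerivAt_exp_mul_comp hφz hhz hvz.hasDerivAt).deriv
  have hhy := hh.self_of_nhds
  have hvh := hv.self_of_nhds.hasDerivAt.comp y hhy
  refine HasDerivAt.congr_of_eventuallyEq ?_ hfirst
  exact (hφ.self_of_nhds.exp.mul ((hφ'.mul hvh).add ((hv'.comp y hhy).mul hh'))).congr_deriv
    (by simp only [Function.comp_apply, Pi.add_apply, Pi.mul_apply]; ring)

theorem hasDerivAt_div_sqrt (c : ℝ) (hy : 0 < y) :
    HasDerivAt (fun z => c / √z) (-c / (2 * √y ^ 3)) y := by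
  have hsy : √y ≠ 0 := (sqrt_pos.2 hy).ne'
  exact ((hasDerivAt_const y c).div (hasDerivAt_sqrt hy.ne') hsy).congr_deriv
    (by field_simp; ring)

theorem hasDerivAt_comp_prodMk {F : ℝ × ℝ → ℝ} {p : ℝ × ℝ}
    (hF : DifferentiableAt ℝ F p) {g k : ℝ → ℝ} {g' k' τ : ℝ} (hg : HasDerivAt g g' τ)
    (hk : HasDerivAt k k' τ) (hp : (g τ, k τ) = p) :
    HasDerivAt (fun z => F (g z, k z))
      (g' * deriv (fun z => F (z, p.2)) p.1 + k' * deriv (fun z => F (p.1, z)) p.2) τ := by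
  set L := fderiv ℝ F p
  have h₁ : deriv (fun z => F (z, p.2)) p.1 = L (1, 0) :=
    (hF.hasFDerivAt.comp_hasDerivAt p.1 ((hasDerivAt_id _).prodMk (hasDerivAt_const _ _))).deriv
  have h₂ : deriv (fun z => F (p.1, z)) p.2 = L (0, 1) :=
    (hF.hasFDerivAt.comp_hasDerivAt p.2 ((hasDerivAt_const _ _).prodMk (hasDerivAt_id _))).deriv
  have hsplit : ((g', k') : ℝ × ℝ) = g' • ((1 : ℝ), (0 : ℝ)) + k' • ((0 : ℝ), (1 : ℝ)) := by
    simp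
  have hcomp := hF.hasFDerivAt.comp_hasDerivAt_of_eq τ (hg.prodMk hk) hp.symm
  rwa [hsplit, map_add, map_smul, map_smul, smul_eq_mul, smul_eq_mul, ← h₁, ← h₂] at hcomp

end OneVariable

section Regularity

variable {u : ℝ → ℝ → ℝ → ℝ} {x y t : ℝ}

theorem contDiffOn_slice_yt (hC : ContDiffOn ℝ 2 (fun p : ℝ × ℝ × ℝ => u p.1 p.2.1 p.2.2) Omega)
    (hx : 0 < x) : ContDiffOn ℝ 2 (fun p : ℝ × ℝ => u x p.1 p.2) {p | 0 < p.1} :=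
  hC.comp (contDiff_const.prodMk contDiff_id).contDiffOn fun _ hp => ⟨hx, hp⟩

theorem contDiffOn_slice_y (hC : ContDiffOn ℝ 2 (fun p : ℝ × ℝ × ℝ => u p.1 p.2.1 p.2.2) Omega)
    (hx : 0 < x) : ContDiffOn ℝ 2 (fun z => u x z t) (Set.Ioi 0) :=
  (contDiffOn_slice_yt hC hx).comp (contDiff_id.prodMk contDiff_const).contDiffOn fun _ hz => hz

theorem differentiableAt_slice_yt
    (hC : ContDiffOn ℝ 2 (fun p : ℝ × ℝ × ℝ => u p.1 p.2.1 p.2.2) Omega) (hx : 0 < x) (hy : 0 < y) :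
    DifferentiableAt ℝ (fun p : ℝ × ℝ => u x p.1 p.2) (y, t) :=
  ((contDiffOn_slice_yt hC hx).differentiableOn two_ne_zero).differentiableAt
    ((isOpen_Ioi.preimage continuous_fst).mem_nhds hy)

theorem differentiableAt_slice_y
    (hC : ContDiffOn ℝ 2 (fun p : ℝ × ℝ × ℝ => u p.1 p.2.1 p.2.2) Omega) (hx : 0 < x) (hy : 0 < y) :
    DifferentiableAt ℝ (fun z => u x z t) y :=
  ((contDiffOn_slice_y hC hx).differentiableOn two_ne_zero).differentiableAt (Ioi_mem_nhds hy)

theorem hasDerivAt_pdY (hC : ContDiffOn ℝ 2 (fun p : ℝ × ℝ × ℝ => u p.1 p.2.1 p.2.2) Omega)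
    (hx : 0 < x) (hy : 0 < y) :
    HasDerivAt (fun z => pdY u x z t) (pdYY u x y t) y := by
  have h := (contDiffOn_slice_y (t := t) hC hx).deriv_of_isOpen (m := 1) isOpen_Ioi (by norm_num)
  exact ((h.differentiableOn one_ne_zero).differentiableAt (Ioi_mem_nhds hy)).hasDerivAt

end Regularity

section Transform

noncomputable def lsExponent (e s y : ℝ) : ℝ := e * s * (4 * √y - s) / 2

noncomputable def lsShift (s y : ℝ) : ℝ := (2 * √y - s) ^ 2 / 4

noncomputable def lsTransform (e : ℝ) (σ : ℝ → ℝ) (u : ℝ → ℝ → ℝ → ℝ) (x y t : ℝ) : ℝ :=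
  exp (lsExponent e (σ t) y) * u x (lsShift (σ t) y) t

variable {e s y : ℝ}

theorem lsShift_pos (hs : s < 2 * √y) : 0 < lsShift s y :=
  div_pos (pow_pos (sub_pos.2 hs) 2) four_pos

theorem hasDerivAt_lsExponent (hy : 0 < y) : HasDerivAt (lsExponent e s) (e * s / √y) y :=
  ((((hasDerivAt_sqrt hy.ne').const_mul 4).sub_const s).const_mul (e * s)).div_const 2
    |>.congr_deriv (by field_simp; ring)

theorem hasDerivAt_lsShift (hy : 0 < y) : HasDerivAt (lsShift s) (1 - s / 2 / √y) y :=
  ((((hasDerivAt_sqrt hy.ne').const_mul 2).sub_const s).pow 2).div_const 4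
    |>.congr_deriv (by field_simp; ring)

theorem hasDerivAt_lsExponent_param :
    HasDerivAt (fun s => lsExponent e s y) (e * (2 * √y - s)) s :=
  (((hasDerivAt_id s).const_mul e).mul ((hasDerivAt_id s).const_sub (4 * √y))).div_const 2
    |>.congr_deriv (by simp only [id]; ring)

theorem hasDerivAt_lsShift_param : HasDerivAt (fun s => lsShift s y) (-(2 * √y - s) / 2) s :=
  (((hasDerivAt_id s).const_sub (2 * √y)).pow 2).div_const 4
    |>.congr_deriv (by simp only [id]; ring)

end Transform

section Derivatives

variable {u : ℝ → ℝ → ℝ → ℝ} {σ : ℝ → ℝ} {e x y t : ℝ}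

theorem pdX_lsTransform :
    pdX (lsTransform e σ u) x y t = exp (lsExponent e (σ t) y) * pdX u x (lsShift (σ t) y) t :=
  deriv_const_mul_field _

theorem pdXX_lsTransform :
    pdXX (lsTransform e σ u) x y t = exp (lsExponent e (σ t) y) * pdXX u x (lsShift (σ t) y) t := by
  unfold pdXX
  simp only [pdX_lsTransform]
  exact deriv_const_mul_field _

theorem pdY_lsTransform (hC : ContDiffOn ℝ 2 (fun p : ℝ × ℝ × ℝ => u p.1 p.2.1 p.2.2) Omega)
    (hx : 0 < x) (hy : 0 < y) (hs : σ t < 2 * √y) :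
    pdY (lsTransform e σ u) x y t = exp (lsExponent e (σ t) y) *
      (e * σ t / √y * u x (lsShift (σ t) y) t + pdY u x (lsShift (σ t) y) t * (1 - σ t / 2 / √y)) :=
  (hasDerivAt_exp_mul_comp (hasDerivAt_lsExponent hy) (hasDerivAt_lsShift hy)
    (differentiableAt_slice_y hC hx (lsShift_pos hs)).hasDerivAt).deriv

theorem pdYY_lsTransform (hC : ContDiffOn ℝ 2 (fun p : ℝ × ℝ × ℝ => u p.1 p.2.1 p.2.2) Omega)
    (hx : 0 < x) (hy : 0 < y) (hs : σ t < 2 * √y) :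
    pdYY (lsTransform e σ u) x y t = exp (lsExponent e (σ t) y) *
      ((-(e * σ t) / (2 * √y ^ 3) + (e * σ t / √y) ^ 2) * u x (lsShift (σ t) y) t +
        2 * (e * σ t / √y) * (1 - σ t / 2 / √y) * pdY u x (lsShift (σ t) y) t +
        pdYY u x (lsShift (σ t) y) t * (1 - σ t / 2 / √y) ^ 2 +
        pdY u x (lsShift (σ t) y) t * (σ t / 2 / (2 * √y ^ 3))) := by
  have hnear : ∀ᶠ z in 𝓝 y, 0 < z ∧ σ t < 2 * √z :=
    ((isOpen_lt continuous_const continuous_id).inter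
      (isOpen_lt continuous_const (continuous_const.mul continuous_sqrt))).mem_nhds ⟨hy, hs⟩
  refine (hasDerivAt_deriv_exp_mul_comp (φ' := fun z => e * σ t / √z)
    (h' := fun z => 1 - σ t / 2 / √z) ?_ ?_ ?_ (hasDerivAt_div_sqrt _ hy)
    (((hasDerivAt_div_sqrt _ hy).const_sub 1).congr_deriv (by ring))
    (hasDerivAt_pdY hC hx (lsShift_pos hs))).deriv
  · filter_upwards [hnear] with z hz using hasDerivAt_lsExponent hz.1
  · filter_upwards [hnear] with z hz using hasDerivAt_lsShift hz.1
  · filter_upwards [hnear] with z hz using differentiableAt_slice_y hC hx (lsShift_pos hz.2)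

theorem pdT_lsTransform (hC : ContDiffOn ℝ 2 (fun p : ℝ × ℝ × ℝ => u p.1 p.2.1 p.2.2) Omega)
    (hx : 0 < x) (hs : σ t < 2 * √y) {σ' : ℝ} (hσ : HasDerivAt σ σ' t) :
    pdT (lsTransform e σ u) x y t = exp (lsExponent e (σ t) y) *
      (e * (2 * √y - σ t) * σ' * u x (lsShift (σ t) y) t +
        (-(2 * √y - σ t) / 2 * σ' * pdY u x (lsShift (σ t) y) t +
          pdT u x (lsShift (σ t) y) t)) := by
  have hφ := (hasDerivAt_lsExponent_param (e := e) (y := y)).comp t hσ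
  have hu := hasDerivAt_comp_prodMk (differentiableAt_slice_yt hC hx (lsShift_pos hs))
    ((hasDerivAt_lsShift_param (y := y)).comp t hσ) (hasDerivAt_id t) rfl
  refine ((hφ.exp.mul hu).congr_deriv ?_).deriv
  simp only [Function.comp_apply, id]
  rw [pdY, pdT]
  ring

end Derivatives

theorem lsEq_lsTransform {a b e x y t : ℝ} {u : ℝ → ℝ → ℝ → ℝ} {σ : ℝ → ℝ}
    (hC : ContDiffOn ℝ 2 (fun p : ℝ × ℝ × ℝ => u p.1 p.2.1 p.2.2) Omega)
    (hx : 0 < x) (hy : 0 < y) (hs : σ t < 2 * √y) (hσ : HasDerivAt σ (e / 2 * σ t) t)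
    (hu : LSEq a b (1 / 4) e u x (lsShift (σ t) y) t) :
    LSEq a b (1 / 4) e (lsTransform e σ u) x y t := by
  rw [LSEq, pdT_lsTransform hC hx hs hσ, pdX_lsTransform, pdXX_lsTransform,
    pdY_lsTransform hC hx hy hs, pdYY_lsTransform hC hx hy hs, hu]
  obtain ⟨ρ, hρ, rfl⟩ : ∃ ρ, 0 < ρ ∧ y = ρ ^ 2 := ⟨√y, sqrt_pos.2 hy, (sq_sqrt hy.le).symm⟩
  simp only [lsShift, sqrt_sq hρ.le]
  field_simp
  ring

/-- Symmetry of the Longstaff–Schwartz equation when `d = 1/4` (subcase 4.1, group `G₃`). -/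
theorem ls_symmetry_d_quarter_exp (a b d e : ℝ) (hd : d = 1 / 4)
    (u : ℝ → ℝ → ℝ → ℝ) (hu : IsLSSolution a b d e u) (ε : ℝ) :
    ∀ x y t : ℝ, 0 < x → 0 < y → 2 * Real.sqrt y > ε * Real.exp (e * t / 2) →
      LSEq a b d e
        (fun x y t =>
          Real.exp (e * ε * Real.exp (e * t / 2) *
              (4 * Real.sqrt y - ε * Real.exp (e * t / 2)) / 2) *
            u x ((2 * Real.sqrt y - ε * Real.exp (e * t / 2)) ^ 2 / 4) t)
        x y t := by
  intro x y t hx hy hs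
  subst hd
  have hσ : HasDerivAt (fun τ => ε * exp (e * τ / 2)) (e / 2 * (ε * exp (e * t / 2))) t :=
    ((((hasDerivAt_id t).const_mul e).div_const 2).exp.const_mul ε).congr_deriv
      (by simp only [id]; ring)
  convert lsEq_lsTransform (σ := fun τ => ε * exp (e * τ / 2)) hu.1 hx hy hs hσ
    (hu.2 x _ t hx (lsShift_pos hs)) using 2
  funext y t
  simp only [lsTransform, lsExponent, lsShift, mul_assoc]
end
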